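/- arXiv:math/0703858 — 2 statements merged into one kernel-verified Lean document; each statement's English description precedes it below -/
import Mathlib

section
/- In the population noisy factor model with w_j := (√λ_1 u_{j1},…,√λ_K u_{jK}), D := {j : w_j ≠ 0}, B := {j : Σ_{jy} ≠ 0} and A := {j : θ_j ≠ 0}: (i) if K = 1 and β_1 ≠ 0, then A = B = D; (ii) if λ_1 = λ_2 = … = λ_K, then A = B. -/
/-!
Each loading direction `u_k` is an eigenvector of `Σ` with eigenvalue `λ_k + σ₀²`. When the first
`K` spikes share one value `ℓ`, the cross-covariance `Σ_{Py}` lies in a single eigenspace, so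
`θ = Σ⁻¹ Σ_{Py} = (ℓ + σ₀²)⁻¹ Σ_{Py}` and `θ`, `Σ_{Py}` have the same support. For `K = 1` this
hypothesis is vacuous, and both `Σ_{Py} = β₁ √λ₁ u_1` and `w_j = √λ₁ u_{j1}` vanish exactly where
`u_1` does.
-/

open Matrix Finset

section SpikedCovariance

variable {R n ι : Type*} [CommRing R] [Fintype n] [DecidableEq n] [Fintype ι]

def spikedCov (v : ι → n → R) (lam : ι → R) (s : R) : Matrix n n R :=
  ∑ k, lam k • vecMulVec (v k) (v k) + s • 1

theorem spikedCov_mulVec_of_orthonormal [DecidableEq ι] {v : ι → n → R}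
    (hv : ∀ i j, v i ⬝ᵥ v j = if i = j then 1 else 0) (lam : ι → R) (s : R) (i : ι) :
    spikedCov v lam s *ᵥ v i = (lam i + s) • v i := by
  simp [spikedCov, add_mulVec, sum_mulVec, smul_mulVec, vecMulVec_mulVec, hv, add_smul]

theorem spikedCov_mulVec_sum_of_lam_eq [DecidableEq ι] {v : ι → n → R}
    (hv : ∀ i j, v i ⬝ᵥ v j = if i = j then 1 else 0) (lam : ι → R) (s : R)
    {κ : Type*} [Fintype κ] (e : κ → ι) (c : κ → R) {ℓ : R} (hℓ : ∀ k, lam (e k) = ℓ) :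
    spikedCov v lam s *ᵥ ∑ k, c k • v (e k) = (ℓ + s) • ∑ k, c k • v (e k) := by
  simp only [mulVec_sum, mulVec_smul, spikedCov_mulVec_of_orthonormal hv, hℓ, smul_sum,
    smul_comm (c _)]

theorem posDef_spikedCov (v : ι → n → ℝ) {lam : ι → ℝ} (hlam : ∀ k, 0 ≤ lam k) {s : ℝ}
    (hs : 0 < s) : (spikedCov v lam s).PosDef :=
  PosDef.posSemidef_add
    (posSemidef_sum _ fun k _ => (posSemidef_vecMulVec_self_star (v k)).smul (hlam k))
    (PosDef.one.smul hs)

end SpikedCovariance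

theorem inv_mulVec_eq_inv_smul_of_mulVec_eq_smul {K n : Type*} [Field K] [Fintype n]
    [DecidableEq n] {S : Matrix n n K} (hS : IsUnit S) {x : n → K} {a : K} (ha : a ≠ 0)
    (hx : S *ᵥ x = a • x) : S⁻¹ *ᵥ x = a⁻¹ • x :=
  calc S⁻¹ *ᵥ x = S⁻¹ *ᵥ (S *ᵥ (a⁻¹ • x)) := by
        rw [mulVec_smul, hx, smul_smul, inv_mul_cancel₀ ha, one_smul]
    _ = a⁻¹ • x := by
        rw [mulVec_mulVec, nonsing_inv_mul _ ((isUnit_iff_isUnit_det S).mp hS), one_mulVec]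

theorem statement_4_general (p M K : ℕ) (hMp : M ≤ p) (hKM : K ≤ M)
    (u : Fin p → Fin p → ℝ)
    (hu_orthonormal_basis : ∀ k k' : Fin p,
      (∑ j, u k j * u k' j) = if k = k' then (1 : ℝ) else 0)
    (lam : Fin M → ℝ) (hlam : ∀ k, 0 < lam k)
    (σ0 : ℝ) (hσ0 : 0 < σ0) (β : Fin K → ℝ)
    (Sig : Matrix (Fin p) (Fin p) ℝ)
    (hSig : Sig = (∑ k : Fin M,
        lam k • vecMulVec (u (Fin.castLE hMp k)) (u (Fin.castLE hMp k)))
      + σ0 ^ 2 • (1 : Matrix (Fin p) (Fin p) ℝ))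
    (SigPy : Fin p → ℝ)
    (hSigPy : SigPy = ∑ k : Fin K, (β k * Real.sqrt (lam (Fin.castLE hKM k))) •
        u (Fin.castLE hMp (Fin.castLE hKM k)))
    (θ : Fin p → ℝ) (hθ : θ = Sig⁻¹ *ᵥ SigPy)
    (w : Fin p → Fin K → ℝ)
    (hw : ∀ j k, w j k = Real.sqrt (lam (Fin.castLE hKM k)) *
        u (Fin.castLE hMp (Fin.castLE hKM k)) j)
    (D B A : Set (Fin p))
    (hD : D = {j | w j ≠ 0}) (hB : B = {j | SigPy j ≠ 0}) (hA : A = {j | θ j ≠ 0}) :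
    ((K = 1 ∧ ∀ k : Fin K, β k ≠ 0) → A = B ∧ B = D) ∧
    ((∀ k k' : Fin K, lam (Fin.castLE hKM k) = lam (Fin.castLE hKM k')) → A = B) := by
  set U : Fin M → Fin p → ℝ := fun k => u (Fin.castLE hMp k)
  have hU : ∀ k k', U k ⬝ᵥ U k' = if k = k' then 1 else 0 := fun k k' => by
    simp [U, dotProduct, hu_orthonormal_basis, Fin.castLE_inj]
  have hSig' : Sig = spikedCov U lam (σ0 ^ 2) := hSig
  have hSig_unit : IsUnit Sig :=
    hSig' ▸ (posDef_spikedCov U (fun k => (hlam k).le) (by positivity)).isUnit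
  have hA_eq_B : ∀ ℓ, 0 ≤ ℓ → (∀ k : Fin K, lam (Fin.castLE hKM k) = ℓ) → A = B := by
    intro ℓ hℓ0 hℓ
    have hne : ℓ + σ0 ^ 2 ≠ 0 := by positivity
    have hθ' : θ = (ℓ + σ0 ^ 2)⁻¹ • SigPy := by
      rw [hθ, inv_mulVec_eq_inv_smul_of_mulVec_eq_smul hSig_unit hne]
      rw [hSig', hSigPy]
      exact spikedCov_mulVec_sum_of_lam_eq hU lam _ _ _ hℓ
    rw [hA, hB, hθ']
    exact Function.support_const_smul_of_ne_zero _ _ (inv_ne_zero hne)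
  refine ⟨?_, fun hlam_eq => ?_⟩
  · rintro ⟨rfl, hβ⟩
    refine ⟨hA_eq_B _ (hlam _).le fun k => by rw [Subsingleton.elim k 0], ?_⟩
    have hsqrt : Real.sqrt (lam (Fin.castLE hKM 0)) ≠ 0 := (Real.sqrt_pos.mpr (hlam _)).ne'
    ext j
    simp [hB, hD, hSigPy, funext_iff, hw, hβ, hsqrt]
  · rcases K.eq_zero_or_pos with rfl | hK
    · exact hA_eq_B 0 le_rfl fun k => k.elim0
    · exact hA_eq_B _ (hlam _).le fun k => hlam_eq k ⟨0, hK⟩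

theorem statement_4 (p M K : ℕ) (hMp : M ≤ p) (hKM : K ≤ M)
    (u : Fin p → Fin p → ℝ)
    (hu_orthonormal_basis : ∀ k k' : Fin p,
      (∑ j, u k j * u k' j) = if k = k' then (1 : ℝ) else 0)
    (lam : Fin M → ℝ) (hlam : ∀ k, 0 < lam k)
    (hlam_anti : ∀ k k' : Fin M, k ≤ k' → lam k' ≤ lam k)
    (σ0 : ℝ) (hσ0 : 0 < σ0) (β : Fin K → ℝ)
    (Sig : Matrix (Fin p) (Fin p) ℝ)
    (hSig : Sig = (∑ k : Fin M,
        lam k • vecMulVec (u (Fin.castLE hMp k)) (u (Fin.castLE hMp k)))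
      + σ0 ^ 2 • (1 : Matrix (Fin p) (Fin p) ℝ))
    (SigPy : Fin p → ℝ)
    (hSigPy : SigPy = ∑ k : Fin K, (β k * Real.sqrt (lam (Fin.castLE hKM k))) •
        u (Fin.castLE hMp (Fin.castLE hKM k)))
    (θ : Fin p → ℝ) (hθ : θ = Sig⁻¹ *ᵥ SigPy)
    (w : Fin p → Fin K → ℝ)
    (hw : ∀ j k, w j k = Real.sqrt (lam (Fin.castLE hKM k)) *
        u (Fin.castLE hMp (Fin.castLE hKM k)) j)
    (D B A : Set (Fin p))
    (hD : D = {j | w j ≠ 0}) (hB : B = {j | SigPy j ≠ 0}) (hA : A = {j | θ j ≠ 0}) :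
    ((K = 1 ∧ ∀ k : Fin K, β k ≠ 0) → A = B ∧ B = D) ∧
    ((∀ k k' : Fin K, lam (Fin.castLE hKM k) = lam (Fin.castLE hKM k')) → A = B) :=
  statement_4_general p M K hMp hKM u hu_orthonormal_basis lam hlam σ0 hσ0 β Sig hSig SigPy hSigPy θ
    hθ w hw D B A hD hB hA
end

section
/- In the population noisy factor model with D := {j : w_j ≠ 0}, and for any nonempty subset C ⊆ D^c := {1,…,p} \ D, the population partial covariance between the response and the predictors indexed by C given the predictors indexed by D vanishes: Σ_{yC} − Σ_{yD} Σ_{DD}^{-1} Σ_{DC} = 0, where Σ_{yC} and Σ_{yD} denote the restrictions of the cross-covariance vector Σ_{Py} to the coordinate sets C and D, Σ_{DD} is the principal submatrix of Σ on D×D (which is invertible since Σ ⪰ σ_0² I), and Σ_{DC} is the submatrix of Σ with rows in D and columns in C. -/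
/-!
The directions `u_1, …, u_K` are eigenvectors of `Σ` with eigenvalues `λ_k + σ_0²`, so
`Σ_{Py} = Σ x` for `x = ∑_k β_k √λ_k / (λ_k + σ_0²) u_k`. Each of these `u_k` vanishes
off `D`, hence so does `x`, and then `Σ_{yD} = x_D Σ_{DD}` and `Σ_{yC} = x_D Σ_{DC}`;
multiplying the first identity by `Σ_{DD}⁻¹ Σ_{DC}` gives the second.
-/

namespace Matrix

section Restriction

variable {R n γ : Type*} [Field R] [Fintype n]

theorem vecMul_comp_eq_vecMul_submatrix (S : Matrix n n R) {x : n → R} {D : Finset n}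
    (hx : ∀ j ∉ D, x j = 0) (g : γ → n) :
    (x ᵥ* S) ∘ g = (x ∘ Subtype.val) ᵥ* S.submatrix (Subtype.val : D → n) g := by
  ext c
  simp only [Function.comp_apply, vecMul, dotProduct, submatrix_apply]
  rw [Finset.sum_coe_sort D (fun j => x j * S j (g c))]
  exact (Finset.sum_subset (Finset.subset_univ D) fun j _ hj => by rw [hx j hj, zero_mul]).symm

theorem comp_vecMul_inv_submatrix_mul_submatrix [DecidableEq n] (S : Matrix n n R) {x : n → R}
    {D : Finset n} (hx : ∀ j ∉ D, x j = 0)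
    (hS : IsUnit (S.submatrix (Subtype.val : D → n) (Subtype.val : D → n)).det) (g : γ → n) :
    ((x ᵥ* S) ∘ Subtype.val) ᵥ*
        ((S.submatrix (Subtype.val : D → n) (Subtype.val : D → n))⁻¹ *
          S.submatrix Subtype.val g) = (x ᵥ* S) ∘ g := by
  rw [vecMul_comp_eq_vecMul_submatrix S hx, vecMul_comp_eq_vecMul_submatrix S hx, vecMul_vecMul]
  exact congrArg _ (mul_nonsing_inv_cancel_left _ _ hS)

end Restriction

section SpikedCovariance

variable {R n ι : Type*} [Fintype ι] [DecidableEq n]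

def spikedCovariance [CommRing R] (v : ι → n → R) (lam : ι → R) (c : R) : Matrix n n R :=
  ∑ m, lam m • vecMulVec (v m) (v m) + c • 1

theorem vecMul_spikedCovariance [CommRing R] [Fintype n] [DecidableEq ι] {v : ι → n → R}
    (hv : ∀ i i', v i ⬝ᵥ v i' = if i = i' then 1 else 0) (lam : ι → R) (c : R) (i : ι) :
    v i ᵥ* spikedCovariance v lam c = (lam i + c) • v i := by
  simp [spikedCovariance, vecMul_add, vecMul_sum, vecMul_smul, vecMul_one, vecMul_vecMulVec, hv,
    add_smul]

theorem posDef_spikedCovariance [Fintype n] (v : ι → n → ℝ) {lam : ι → ℝ}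
    (hlam : ∀ m, 0 ≤ lam m) {c : ℝ} (hc : 0 < c) : (spikedCovariance v lam c).PosDef :=
  PosDef.posSemidef_add
    (posSemidef_sum _ fun m _ => (show (vecMulVec (v m) (v m)).PosSemidef by
      simpa using posSemidef_vecMulVec_self_star (v m)).smul (hlam m))
    (PosDef.one.smul hc)

end SpikedCovariance

end Matrix

open Matrix

theorem statement_5_general (p M K : ℕ) (hMp : M ≤ p) (hKM : K ≤ M)
    (u : Fin p → Fin p → ℝ)
    (hu_orthonormal_basis : ∀ k k' : Fin p,
      (∑ j, u k j * u k' j) = if k = k' then (1 : ℝ) else 0)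
    (lam : Fin M → ℝ) (hlam : ∀ k, 0 < lam k)
    (σ0 : ℝ) (hσ0 : 0 < σ0) (β : Fin K → ℝ)
    (Sig : Matrix (Fin p) (Fin p) ℝ)
    (hSig : Sig = (∑ k : Fin M,
        lam k • vecMulVec (u (Fin.castLE hMp k)) (u (Fin.castLE hMp k)))
      + σ0 ^ 2 • (1 : Matrix (Fin p) (Fin p) ℝ))
    (SigPy : Fin p → ℝ)
    (hSigPy : SigPy = ∑ k : Fin K, (β k * Real.sqrt (lam (Fin.castLE hKM k))) •
        u (Fin.castLE hMp (Fin.castLE hKM k)))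
    (w : Fin p → Fin K → ℝ)
    (hw : ∀ j k, w j k = Real.sqrt (lam (Fin.castLE hKM k)) *
        u (Fin.castLE hMp (Fin.castLE hKM k)) j)
    (D C : Finset (Fin p))
    (hD : ∀ j, j ∈ D ↔ w j ≠ 0)
    -- submatrices / subvectors
    (SigDD : Matrix {x // x ∈ D} {x // x ∈ D} ℝ)
    (hSigDD : SigDD = Sig.submatrix (Subtype.val : {x // x ∈ D} → Fin p) Subtype.val)
    (SigDC : Matrix {x // x ∈ D} {x // x ∈ C} ℝ)
    (hSigDC : SigDC = Sig.submatrix (Subtype.val : {x // x ∈ D} → Fin p)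
        (Subtype.val : {x // x ∈ C} → Fin p))
    (SigyD : {x // x ∈ D} → ℝ) (hSigyD : SigyD = fun d => SigPy d.1)
    (SigyC : {x // x ∈ C} → ℝ) (hSigyC : SigyC = fun c => SigPy c.1) :
    SigyC - SigyD ᵥ* (SigDD⁻¹ * SigDC) = 0 := by
  set v : Fin M → Fin p → ℝ := fun m => u (Fin.castLE hMp m)
  have hv : ∀ m m', v m ⬝ᵥ v m' = if m = m' then 1 else 0 := fun m m' => by
    simp [v, dotProduct, hu_orthonormal_basis, (Fin.castLE_injective hMp).eq_iff]
  have hSig_spiked : Sig = spikedCovariance v lam (σ0 ^ 2) := hSig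
  have hv_supp : ∀ k j, j ∉ D → v (Fin.castLE hKM k) j = 0 := fun k j hj => by
    have hwj : w j k = 0 := by rw [not_not.mp (mt (hD j).mpr hj), Pi.zero_apply]
    rw [hw, mul_eq_zero] at hwj
    exact hwj.resolve_left (Real.sqrt_ne_zero'.mpr (hlam _))
  set x : Fin p → ℝ := ∑ k : Fin K, (β k * Real.sqrt (lam (Fin.castLE hKM k)) /
    (lam (Fin.castLE hKM k) + σ0 ^ 2)) • v (Fin.castLE hKM k)
  have hx_supp : ∀ j ∉ D, x j = 0 := fun j hj => by
    simp [x, hv_supp _ j hj]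
  have hxSig : x ᵥ* Sig = SigPy := by
    rw [hSigPy, hSig_spiked, sum_vecMul]
    refine Finset.sum_congr rfl fun k _ => ?_
    have hpos : lam (Fin.castLE hKM k) + σ0 ^ 2 ≠ 0 := (add_pos (hlam _) (pow_pos hσ0 2)).ne'
    rw [smul_vecMul, vecMul_spikedCovariance hv, smul_smul, div_mul_cancel₀ _ hpos]
  have hDD : IsUnit SigDD.det := by
    rw [hSigDD, ← isUnit_iff_isUnit_det, hSig_spiked]
    exact ((posDef_spikedCovariance v (fun m => (hlam m).le) (pow_pos hσ0 2)).submatrix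
      Subtype.val_injective).isUnit
  subst hSigDD hSigDC hSigyD hSigyC
  rw [← hxSig]
  exact sub_eq_zero.mpr (comp_vecMul_inv_submatrix_mul_submatrix Sig hx_supp hDD _).symm

theorem statement_5 (p M K : ℕ) (hMp : M ≤ p) (hKM : K ≤ M)
    (u : Fin p → Fin p → ℝ)
    (hu_orthonormal_basis : ∀ k k' : Fin p,
      (∑ j, u k j * u k' j) = if k = k' then (1 : ℝ) else 0)
    (lam : Fin M → ℝ) (hlam : ∀ k, 0 < lam k)
    (σ0 : ℝ) (hσ0 : 0 < σ0) (β : Fin K → ℝ)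
    (Sig : Matrix (Fin p) (Fin p) ℝ)
    (hSig : Sig = (∑ k : Fin M,
        lam k • vecMulVec (u (Fin.castLE hMp k)) (u (Fin.castLE hMp k)))
      + σ0 ^ 2 • (1 : Matrix (Fin p) (Fin p) ℝ))
    (SigPy : Fin p → ℝ)
    (hSigPy : SigPy = ∑ k : Fin K, (β k * Real.sqrt (lam (Fin.castLE hKM k))) •
        u (Fin.castLE hMp (Fin.castLE hKM k)))
    (w : Fin p → Fin K → ℝ)
    (hw : ∀ j k, w j k = Real.sqrt (lam (Fin.castLE hKM k)) *
        u (Fin.castLE hMp (Fin.castLE hKM k)) j)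
    (D C : Finset (Fin p))
    (hD : ∀ j, j ∈ D ↔ w j ≠ 0)
    (hC : ∀ j ∈ C, j ∉ D) (hCne : C.Nonempty)
    -- submatrices / subvectors
    (SigDD : Matrix {x // x ∈ D} {x // x ∈ D} ℝ)
    (hSigDD : SigDD = Sig.submatrix (Subtype.val : {x // x ∈ D} → Fin p) Subtype.val)
    (SigDC : Matrix {x // x ∈ D} {x // x ∈ C} ℝ)
    (hSigDC : SigDC = Sig.submatrix (Subtype.val : {x // x ∈ D} → Fin p)
        (Subtype.val : {x // x ∈ C} → Fin p))
    (SigyD : {x // x ∈ D} → ℝ) (hSigyD : SigyD = fun d => SigPy d.1)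
    (SigyC : {x // x ∈ C} → ℝ) (hSigyC : SigyC = fun c => SigPy c.1) :
    SigyC - SigyD ᵥ* (SigDD⁻¹ * SigDC) = 0 :=
  statement_5_general p M K hMp hKM u hu_orthonormal_basis lam hlam σ0 hσ0 β Sig hSig SigPy hSigPy w
    hw D C hD SigDD hSigDD SigDC hSigDC SigyD hSigyD SigyC hSigyC
end
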